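/- arXiv:2110.15188 — 3 statements merged into one kernel-verified Lean document; each statement's English description precedes it below -/
import Mathlib

section
/- Let a ≤ b be real numbers. The measure ν = (1/2)(λ restricted to [a,b] + δ_a + δ_b) on ℝ satisfies ∫ e^{−|x−y|} dν(x) = 1 for every y ∈ [a,b]; consequently the magnitude of the line segment [a,b] (the total mass of ν) equals 1 + (b−a)/2. -/
open MeasureTheory
open scoped ENNReal

/-- The magnitude measure of the line segment `[a,b]`:
`ν = (1/2)(Lebesgue restricted to [a,b] + δ_a + δ_b)` satisfies
`∫ e^{-|x-y|} dν(x) = 1` for all `y ∈ [a,b]`, and its total mass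
(the magnitude of the segment) is `1 + (b-a)/2`. -/
theorem magnitude_measure_line_segment (a b : ℝ) (hab : a ≤ b)
    (ν : Measure ℝ)
    (hν : ν = (2 : ℝ≥0∞)⁻¹ •
      (volume.restrict (Set.Icc a b) + Measure.dirac a + Measure.dirac b)) :
    (∀ y ∈ Set.Icc a b, ∫ x, Real.exp (-|x - y|) ∂ν = 1) ∧
    (ν Set.univ).toReal = 1 + (b - a) / 2 := by
  subst hν
  constructor
  · rintro y ⟨hay, hyb⟩
    have hf : Continuous fun x : ℝ => Real.exp (-|x - y|) := by fun_prop
    have hIcc : ∫ x in Set.Icc a b, Real.exp (-|x - y|) =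
        (1 - Real.exp (a - y)) + (1 - Real.exp (y - b)) := by
      rw [MeasureTheory.integral_Icc_eq_integral_Ioc, ← intervalIntegral.integral_of_le hab,
          ← intervalIntegral.integral_add_adjacent_intervals (b := y)
            (hf.intervalIntegrable a y) (hf.intervalIntegrable y b)]
      congr 1
      · rw [intervalIntegral.integral_congr (g := fun x => Real.exp (x - y))
          (fun x hx => by
            rw [Set.uIcc_of_le hay] at hx
            simp only
            rw [abs_of_nonpos (by linarith [hx.2]), neg_neg]),
          intervalIntegral.integral_comp_sub_right _ y, integral_exp]
        simp
      · rw [intervalIntegral.integral_congr (g := fun x => Real.exp (y - x))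
          (fun x hx => by
            rw [Set.uIcc_of_le hyb] at hx
            simp only
            rw [abs_of_nonneg (by linarith [hx.1]), neg_sub]),
          intervalIntegral.integral_comp_sub_left _ y, integral_exp]
        simp
    have hd : ∀ c : ℝ, Integrable (fun x : ℝ => Real.exp (-|x - y|)) (Measure.dirac c) := by
      intro c
      refine ⟨hf.aestronglyMeasurable, ?_⟩
      rw [HasFiniteIntegral, lintegral_dirac]
      exact ENNReal.coe_lt_top
    have hI : IntegrableOn (fun x : ℝ => Real.exp (-|x - y|)) (Set.Icc a b) volume :=
      hf.integrableOn_Icc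
    rw [integral_smul_measure, integral_add_measure (hI.integrable.add_measure (hd a)) (hd b),
        integral_add_measure hI.integrable (hd a), integral_dirac, integral_dirac, hIcc]
    have h1 : |a - y| = y - a := by rw [abs_of_nonpos (by linarith)]; ring
    have h2 : |b - y| = b - y := abs_of_nonneg (by linarith)
    rw [h1, h2]
    have e1 : Real.exp (-(y - a)) = Real.exp (a - y) := by ring_nf
    have e2 : Real.exp (-(b - y)) = Real.exp (y - b) := by ring_nf
    rw [e1, e2]
    simp only [ENNReal.toReal_inv, ENNReal.toReal_ofNat, smul_eq_mul]
    ring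
  · simp only [Measure.smul_apply, Measure.coe_add, Pi.add_apply,
      Measure.restrict_apply_univ, Real.volume_Icc, Measure.dirac_apply_of_mem (Set.mem_univ a),
      Measure.dirac_apply_of_mem (Set.mem_univ b), smul_eq_mul]
    rw [ENNReal.toReal_mul, ENNReal.toReal_add (by finiteness) (by finiteness),
        ENNReal.toReal_add (by finiteness) (by finiteness),
        ENNReal.toReal_ofReal (by linarith)]
    simp
    ring
end

section
/- Let a < b and c < d be real numbers and let R = [a,b] × [c,d] ⊆ ℝ² with the ℓ1 distance d₁(x,y) = |x₁−y₁| + |x₂−y₂|. Let ν₁ = (1/2)(λ restricted to [a,b] + δ_a + δ_b) and ν₂ = (1/2)(λ restricted to [c,d] + δ_c + δ_d) be the magnitude measures of the two line segments. Then the product measure ν = ν₁ × ν₂ satisfies ∫ e^{−d₁(x,y)} dν(x) = 1 for every y ∈ R; consequently the magnitude of R with the ℓ1 metric equals (1 + (b−a)/2)·(1 + (d−c)/2). -/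
open MeasureTheory
open scoped ENNReal

private lemma exp_abs_integrable (y : ℝ) (μ : Measure ℝ) [IsFiniteMeasure μ] :
    Integrable (fun x : ℝ => Real.exp (-|x - y|)) μ := by
  have hc : Continuous fun x : ℝ => Real.exp (-|x - y|) := by continuity
  refine Integrable.mono' (integrable_const 1) hc.aestronglyMeasurable ?_
  filter_upwards with x
  rw [Real.norm_eq_abs, abs_of_pos (Real.exp_pos _)]
  exact Real.exp_le_one_iff.2 (neg_nonpos.2 (abs_nonneg _))

private lemma nu_fin (a b : ℝ) :
    IsFiniteMeasure ((2 : ℝ≥0∞)⁻¹ •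
      (volume.restrict (Set.Icc a b) + Measure.dirac a + Measure.dirac b)) := by
  constructor
  simp only [Measure.smul_apply, Measure.add_apply, Measure.restrict_apply_univ,
    Real.volume_Icc, Measure.dirac_apply_of_mem (Set.mem_univ _), smul_eq_mul]
  exact ENNReal.mul_lt_top (by simp) (by finiteness)

private lemma one_dim_integral (a b y : ℝ) (hab : a ≤ b) (hy : y ∈ Set.Icc a b) :
    ∫ x, Real.exp (-|x - y|)
      ∂((2 : ℝ≥0∞)⁻¹ •
        (volume.restrict (Set.Icc a b) + Measure.dirac a + Measure.dirac b)) = 1 := by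
  obtain ⟨hay, hyb⟩ := hy
  have hfin : IsFiniteMeasure (volume.restrict (Set.Icc a b)) := by
    constructor
    rw [Measure.restrict_apply_univ]
    exact (measure_Icc_lt_top)
  rw [integral_smul_measure,
    integral_add_measure ((exp_abs_integrable y _).add_measure (exp_abs_integrable y _))
      (exp_abs_integrable y _),
    integral_add_measure (exp_abs_integrable y _) (exp_abs_integrable y _),
    integral_dirac, integral_dirac]
  have hIcc : ∫ x in Set.Icc a b, Real.exp (-|x - y|)
      = ∫ x in a..b, Real.exp (-|x - y|) := by
    rw [MeasureTheory.integral_Icc_eq_integral_Ioc, intervalIntegral.integral_of_le hab]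
  have hsplit : (∫ x in a..y, Real.exp (-|x - y|)) + ∫ x in y..b, Real.exp (-|x - y|)
      = ∫ x in a..b, Real.exp (-|x - y|) := by
    apply intervalIntegral.integral_add_adjacent_intervals <;>
      exact (by continuity : Continuous fun x : ℝ => Real.exp (-|x - y|)).intervalIntegrable _ _
  have h1 : (∫ x in a..y, Real.exp (-|x - y|)) = 1 - Real.exp (a - y) := by
    have : (∫ x in a..y, Real.exp (-|x - y|)) = ∫ x in a..y, Real.exp (x - y) := by
      apply intervalIntegral.integral_congr
      intro x hx
      rw [Set.uIcc_of_le hay] at hx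
      show Real.exp (-|x - y|) = Real.exp (x - y)
      rw [abs_of_nonpos (by linarith [hx.2] : x - y ≤ 0), neg_neg]
    rw [this, intervalIntegral.integral_comp_sub_right Real.exp y, integral_exp]
    simp
  have h2 : (∫ x in y..b, Real.exp (-|x - y|)) = 1 - Real.exp (y - b) := by
    have : (∫ x in y..b, Real.exp (-|x - y|)) = ∫ x in y..b, Real.exp (y - x) := by
      apply intervalIntegral.integral_congr
      intro x hx
      rw [Set.uIcc_of_le hyb] at hx
      show Real.exp (-|x - y|) = Real.exp (y - x)
      rw [abs_of_nonneg (by linarith [hx.1] : 0 ≤ x - y), neg_sub]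
    rw [this, intervalIntegral.integral_comp_sub_left Real.exp y, integral_exp]
    simp
  rw [hIcc, ← hsplit, h1, h2,
    abs_of_nonpos (by linarith : a - y ≤ 0), abs_of_nonneg (by linarith : 0 ≤ b - y),
    neg_neg, neg_sub b y]
  have h2r : ((2 : ℝ≥0∞)⁻¹).toReal = 2⁻¹ := by simp
  rw [h2r, smul_eq_mul]
  ring

private lemma one_dim_mass (a b : ℝ) (hab : a ≤ b) :
    (((2 : ℝ≥0∞)⁻¹ •
      (volume.restrict (Set.Icc a b) + Measure.dirac a + Measure.dirac b))
        Set.univ).toReal = 1 + (b - a) / 2 := by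
  simp only [Measure.smul_apply, Measure.add_apply, Measure.restrict_apply_univ,
    Real.volume_Icc, Measure.dirac_apply_of_mem (Set.mem_univ _), smul_eq_mul]
  rw [ENNReal.toReal_mul,
    ENNReal.toReal_add (by finiteness) (by finiteness),
    ENNReal.toReal_add (by finiteness) (by finiteness),
    ENNReal.toReal_ofReal (by linarith : (0:ℝ) ≤ b - a)]
  simp
  ring

/-- On the rectangle `R = [a,b] × [c,d] ⊆ ℝ²` with the ℓ¹ distance
`d₁(x,y) = |x₁-y₁| + |x₂-y₂|`, the product `ν = ν₁ × ν₂` of the magnitude measures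
of the two line segments satisfies `∫ e^{-d₁(x,y)} dν(x) = 1` for all `y ∈ R`;
consequently the magnitude of `R` is `(1 + (b-a)/2)·(1 + (d-c)/2)`. -/
theorem magnitude_measure_rectangle_l1 (a b c d : ℝ) (hab : a < b) (hcd : c < d)
    (ν₁ ν₂ : Measure ℝ)
    (hν₁ : ν₁ = (2 : ℝ≥0∞)⁻¹ •
      (volume.restrict (Set.Icc a b) + Measure.dirac a + Measure.dirac b))
    (hν₂ : ν₂ = (2 : ℝ≥0∞)⁻¹ •
      (volume.restrict (Set.Icc c d) + Measure.dirac c + Measure.dirac d)) :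
    (∀ y ∈ Set.Icc a b ×ˢ Set.Icc c d,
      ∫ x : ℝ × ℝ, Real.exp (-(|x.1 - y.1| + |x.2 - y.2|)) ∂(ν₁.prod ν₂) = 1) ∧
    ((ν₁.prod ν₂) Set.univ).toReal = (1 + (b - a) / 2) * (1 + (d - c) / 2) := by
  subst hν₁ hν₂
  haveI := nu_fin a b
  haveI := nu_fin c d
  constructor
  · intro y hy
    obtain ⟨hy1, hy2⟩ := hy
    simp_rw [neg_add, Real.exp_add]
    rw [integral_prod_mul (f := fun t : ℝ => Real.exp (-|t - y.1|)) (g := fun t : ℝ => Real.exp (-|t - y.2|))]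
    rw [one_dim_integral a b y.1 hab.le hy1, one_dim_integral c d y.2 hcd.le hy2, one_mul]
  · rw [← Set.univ_prod_univ, Measure.prod_prod, ENNReal.toReal_mul,
      one_dim_mass a b hab.le, one_dim_mass c d hcd.le]
end

section
/- Let w, h > 0 and α ∈ ℝ. On the rectangle [0,w] × [0,h] define the distance d(x,y) = (1+|α|)|x₁−y₁| + |x₂−y₂| (the ℓ1 curve-length metric induced by the single-channel line image Φ(x) = αx₁ + const). Then the product measure ν = ν₁ × ν₂, where ν₁ = (1/2)((1+|α|)·λ restricted to [0,w] + δ_0 + δ_w) and ν₂ = (1/2)(λ restricted to [0,h] + δ_0 + δ_h), satisfies ∫ e^{−d(x,y)} dν(x) = 1 for every y ∈ [0,w] × [0,h]. -/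
/-!
The kernel factorises, `e^{-d(x,y)} = e^{-(1+|α|)|x₁-y₁|} e^{-|x₂-y₂|}`, and so does `ν`, so by
Fubini it suffices that on `[0,L]` with the metric `c|s-t|` the measure
`½(c·λ + δ₀ + δ_L)` is a magnitude measure. There the Lebesgue part contributes
`(2 - e^{-cy} - e^{-c(L-y)})/2`, and the two endpoint atoms contribute exactly the missing
`(e^{-cy} + e^{-c(L-y)})/2`.
-/

open MeasureTheory Real
open scoped ENNReal

theorem integral_exp_mul_add {c : ℝ} (hc : c ≠ 0) (d a b : ℝ) :
    ∫ x in a..b, exp (c * x + d) = (exp (c * b + d) - exp (c * a + d)) / c := by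
  rw [intervalIntegral.integral_comp_mul_add (fun x => exp x) hc, integral_exp, smul_eq_mul,
    inv_mul_eq_div]

theorem setIntegral_Icc_exp_neg_mul_abs_sub {c L y : ℝ} (hc : 0 < c) (hy : y ∈ Set.Icc 0 L) :
    ∫ x in Set.Icc 0 L, exp (-(c * |x - y|)) =
      (2 - exp (-(c * y)) - exp (-(c * (L - y)))) / c := by
  obtain ⟨hy0, hyL⟩ := hy
  have hcont : Continuous fun x => exp (-(c * |x - y|)) := by fun_prop
  have left : ∫ x in 0..y, exp (-(c * |x - y|)) = (1 - exp (-(c * y))) / c := by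
    rw [intervalIntegral.integral_congr (g := fun x => exp (c * x + -(c * y))),
      integral_exp_mul_add hc.ne', add_neg_cancel, mul_zero, zero_add, exp_zero]
    · intro x hx
      rw [Set.uIcc_of_le hy0] at hx
      simp only [abs_of_nonpos (sub_nonpos.2 hx.2)]
      ring_nf
  have right : ∫ x in y..L, exp (-(c * |x - y|)) = (1 - exp (-(c * (L - y)))) / c := by
    rw [intervalIntegral.integral_congr (g := fun x => exp (-c * x + c * y)),
      integral_exp_mul_add (neg_ne_zero.2 hc.ne')]
    · rw [neg_mul c y, neg_add_cancel, exp_zero, show -c * L + c * y = -(c * (L - y)) by ring,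
        div_neg, ← neg_div, neg_sub]
    · intro x hx
      rw [Set.uIcc_of_le hyL] at hx
      simp only [abs_of_nonneg (sub_nonneg.2 hx.1)]
      ring_nf
  rw [integral_Icc_eq_integral_Ioc, ← intervalIntegral.integral_of_le (hy0.trans hyL),
    ← intervalIntegral.integral_add_adjacent_intervals (hcont.intervalIntegrable 0 y)
      (hcont.intervalIntegrable y L), left, right]
  ring

noncomputable def intervalMagnitudeMeasure (c L : ℝ) : Measure ℝ :=
  (2 : ℝ≥0∞)⁻¹ • (ENNReal.ofReal c • volume.restrict (Set.Icc 0 L) +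
    Measure.dirac 0 + Measure.dirac L)

instance (c L : ℝ) : IsFiniteMeasure (intervalMagnitudeMeasure c L) := by
  constructor
  simp [intervalMagnitudeMeasure, ENNReal.mul_lt_top]

theorem integrable_exp_neg_mul_abs_sub {c : ℝ} (hc : 0 ≤ c) (y : ℝ) (μ : Measure ℝ)
    [IsFiniteMeasure μ] : Integrable (fun x => exp (-(c * |x - y|))) μ := by
  have hcont : Continuous fun x => exp (-(c * |x - y|)) := by fun_prop
  refine Integrable.of_bound hcont.aestronglyMeasurable 1 <| .of_forall fun x => ?_
  rw [norm_of_nonneg (exp_nonneg _), exp_le_one_iff, neg_nonpos]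
  positivity

theorem integral_exp_neg_mul_abs_sub_intervalMagnitudeMeasure {c L y : ℝ} (hc : 0 < c)
    (hy : y ∈ Set.Icc 0 L) :
    ∫ x, exp (-(c * |x - y|)) ∂intervalMagnitudeMeasure c L = 1 := by
  have hint := integrable_exp_neg_mul_abs_sub hc.le y
  have hLeb :=
    (hint (volume.restrict (Set.Icc 0 L))).smul_measure (ENNReal.ofReal_ne_top (r := c))
  rw [intervalMagnitudeMeasure, integral_smul_measure,
    integral_add_measure (hLeb.add_measure (hint _)) (hint _),
    integral_add_measure hLeb (hint _), integral_smul_measure, integral_dirac, integral_dirac,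
    setIntegral_Icc_exp_neg_mul_abs_sub hc hy, ENNReal.toReal_ofReal hc.le, ENNReal.toReal_inv,
    ENNReal.toReal_ofNat, zero_sub, abs_neg, abs_of_nonneg hy.1, abs_of_nonneg (sub_nonneg.2 hy.2),
    smul_eq_mul, smul_eq_mul, mul_div_cancel₀ _ hc.ne']
  ring

theorem magnitude_measure_2d_line_image_general (w h α : ℝ)
    (d : ℝ × ℝ → ℝ × ℝ → ℝ)
    (hd : ∀ x y, d x y = (1 + |α|) * |x.1 - y.1| + |x.2 - y.2|)
    (ν₁ ν₂ : Measure ℝ)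
    (hν₁ : ν₁ = (2 : ℝ≥0∞)⁻¹ •
      (ENNReal.ofReal (1 + |α|) • volume.restrict (Set.Icc 0 w) +
        Measure.dirac 0 + Measure.dirac w))
    (hν₂ : ν₂ = (2 : ℝ≥0∞)⁻¹ •
      (volume.restrict (Set.Icc 0 h) + Measure.dirac 0 + Measure.dirac h)) :
    ∀ y ∈ Set.Icc (0 : ℝ) w ×ˢ Set.Icc (0 : ℝ) h,
      ∫ x : ℝ × ℝ, Real.exp (-(d x y)) ∂(ν₁.prod ν₂) = 1 := by
  rintro y ⟨hy₁, hy₂⟩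
  have hν₁' : ν₁ = intervalMagnitudeMeasure (1 + |α|) w := hν₁
  have hν₂' : ν₂ = intervalMagnitudeMeasure 1 h := by
    rw [hν₂, intervalMagnitudeMeasure, ENNReal.ofReal_one, one_smul]
  have hsplit : ∀ x : ℝ × ℝ,
      exp (-d x y) = exp (-((1 + |α|) * |x.1 - y.1|)) * exp (-(1 * |x.2 - y.2|)) := by
    intro x
    rw [hd, ← exp_add]
    ring_nf
  simp only [hsplit]
  rw [hν₁', hν₂', integral_prod_mul (fun t => exp (-((1 + |α|) * |t - y.1|)))
      (fun t => exp (-(1 * |t - y.2|))),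
    integral_exp_neg_mul_abs_sub_intervalMagnitudeMeasure (by positivity) hy₁,
    integral_exp_neg_mul_abs_sub_intervalMagnitudeMeasure one_pos hy₂, mul_one]

/-- For the analogue line image `Φ(x) = αx₁ + const` on `[0,w] × [0,h]` with
ℓ¹ curve-length metric `d(x,y) = (1+|α|)|x₁-y₁| + |x₂-y₂|`, the product measure
`ν = ν₁ × ν₂` with `ν₁ = (1/2)((1+|α|)·λ|_{[0,w]} + δ_0 + δ_w)` and
`ν₂ = (1/2)(λ|_{[0,h]} + δ_0 + δ_h)` is a magnitude measure. -/
theorem magnitude_measure_2d_line_image (w h α : ℝ) (hw : 0 < w) (hh : 0 < h)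
    (d : ℝ × ℝ → ℝ × ℝ → ℝ)
    (hd : ∀ x y, d x y = (1 + |α|) * |x.1 - y.1| + |x.2 - y.2|)
    (ν₁ ν₂ : Measure ℝ)
    (hν₁ : ν₁ = (2 : ℝ≥0∞)⁻¹ •
      (ENNReal.ofReal (1 + |α|) • volume.restrict (Set.Icc 0 w) +
        Measure.dirac 0 + Measure.dirac w))
    (hν₂ : ν₂ = (2 : ℝ≥0∞)⁻¹ •
      (volume.restrict (Set.Icc 0 h) + Measure.dirac 0 + Measure.dirac h)) :
    ∀ y ∈ Set.Icc (0 : ℝ) w ×ˢ Set.Icc (0 : ℝ) h,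
      ∫ x : ℝ × ℝ, Real.exp (-(d x y)) ∂(ν₁.prod ν₂) = 1 :=
  magnitude_measure_2d_line_image_general w h α d hd ν₁ ν₂ hν₁ hν₂
end
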